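/- Let G be a finite connected simple graph of order n such that 2·τ(G) > n and τ(G) = n−k, and let W be its (unique) twin class of cardinality τ(G). If the subgraph of G induced by W is complete, then 2·β_p(G) ≤ 2n − k. -/

import Mathlib

open Classical SimpleGraph

noncomputable section

/-- The distance from a vertex to a set of vertices. -/
def setDist {V : Type*} (G : SimpleGraph V) (u : V) (S : Set V) : ℕ :=
  sInf ((G.dist u) '' S)

/-- A locating partition of a graph: a partition of the vertex set such that every
vertex is uniquely determined by its vector of distances to the parts. -/
def IsLocatingPartition {V : Type*} (G : SimpleGraph V) (P : Set (Set V)) : Prop :=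
  Setoid.IsPartition P ∧
    ∀ u v : V, (∀ S ∈ P, setDist G u S = setDist G v S) → u = v

/-- The partition dimension: the minimum cardinality of a locating partition. -/
def partitionDim {V : Type*} (G : SimpleGraph V) : ℕ :=
  sInf {k | ∃ P : Set (Set V), IsLocatingPartition G P ∧ P.ncard = k}

/-- Two vertices are twins if they have the same neighbors other than themselves. -/
def IsTwin {V : Type*} (G : SimpleGraph V) (u v : V) : Prop :=
  G.neighborSet u \ {v} = G.neighborSet v \ {u}

/-- The twin class of a vertex. -/
def twinClass {V : Type*} (G : SimpleGraph V) (u : V) : Set V :=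
  {v | IsTwin G u v}

/-- The twin number: the maximum cardinality of a twin class. -/
def twinNumber {V : Type*} (G : SimpleGraph V) : ℕ :=
  sSup {k | ∃ u : V, (twinClass G u).ncard = k}

/-!
Let `W` be the twin class of `u`: a clique with `|Wᶜ| < |W|`. Twins are at equal distance from
every other vertex, so if each vertex `m` of some `M ⊆ Wᶜ` is merged with its own partner in
`W \ {u}` and all other vertices stay singletons, the partition is locating as soon as each such `m`
is told apart from `u` by a singleton part. For `m` not adjacent to `W` the part `{u}` does this,
as `W` is a clique. For `m` adjacent to `W`, every vertex telling `m` from `u` lies outside `W`;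
an Ore-type domination argument collects such vertices, for all these `m` outside `Z`, in a set
`Z ⊆ Wᶜ` with `2|Z| ≤ |Wᶜ|`. Taking `M = Wᶜ \ Z` gives a locating partition with
`n - |M| ≤ n - |Wᶜ|/2` parts.
-/

section Twins

variable {V : Type*} {G : SimpleGraph V} {u v x : V}

lemma mem_twinClass : v ∈ twinClass G u ↔ IsTwin G u v := Iff.rfl

lemma mem_twinClass_self : u ∈ twinClass G u := rfl

lemma isTwin_iff_forall_adj_iff :
    IsTwin G u v ↔ ∀ z, z ≠ u → z ≠ v → (G.Adj u z ↔ G.Adj v z) := by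
  refine ⟨fun h z hzu hzv => ?_, fun h => Set.ext fun z => ?_⟩
  · have hz := congrArg (z ∈ ·) h
    simpa [hzu, hzv] using hz
  · by_cases hzu : z = u
    · subst hzu; simp
    by_cases hzv : z = v
    · subst hzv; simp
    simpa [hzu, hzv] using h z hzu hzv

namespace IsTwin

lemma symm (h : IsTwin G u v) : IsTwin G v u := Eq.symm h

lemma adj_of_adj (h : IsTwin G u v) (hux : G.Adj u x) (hxv : x ≠ v) : G.Adj v x :=
  ((isTwin_iff_forall_adj_iff.mp h) x hux.ne.symm hxv).mp hux

lemma dist_le (hG : G.Connected) (h : IsTwin G u v) (hx : x ≠ u) :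
    G.dist x v ≤ G.dist x u := by
  obtain ⟨p, hp⟩ := (hG u x).exists_walk_length_eq_dist
  cases p with
  | nil => exact absurd rfl hx
  | cons hadj q =>
    rename_i y
    have hvy : G.dist v y ≤ 1 := by
      by_cases hy : y = v
      · simp [hy]
      · exact (dist_eq_one_iff_adj.mpr (h.adj_of_adj hadj hy)).le
    rw [dist_comm, dist_comm (u := x), ← hp, Walk.length_cons]
    calc G.dist v x ≤ G.dist v y + G.dist y x := hG.dist_triangle
      _ ≤ 1 + q.length := add_le_add hvy (SimpleGraph.dist_le q)
      _ = q.length + 1 := add_comm _ _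

lemma dist_eq (hG : G.Connected) (h : IsTwin G u v) (hxu : x ≠ u) (hxv : x ≠ v) :
    G.dist x u = G.dist x v :=
  le_antisymm (h.symm.dist_le hG hxv) (h.dist_le hG hxu)

end IsTwin

end Twins

section Domination

variable {α : Type*} (H : SimpleGraph α)

def Dominates (D A : Set α) : Prop := ∀ a ∈ A \ D, ∃ z ∈ D, H.Adj a z

variable {H}

lemma Dominates.diff_singleton {U A D : Set α} {a : α} (hAU : A ⊆ U) (hD : Dominates H D A)
    (ha : ∃ z ∈ U, H.Adj a z) (hpriv : ∀ z ∈ U \ D, ¬H.Adj a z) :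
    Dominates H (D \ {a}) A := by
  rintro b ⟨hbA, hbD⟩
  by_cases hba : b = a
  · subst hba
    obtain ⟨z, hzU, hbz⟩ := ha
    exact ⟨z, ⟨by_contra fun hzD => hpriv z ⟨hzU, hzD⟩ hbz, hbz.ne.symm⟩, hbz⟩
  · have hbD' : b ∉ D := fun h => hbD ⟨h, hba⟩
    obtain ⟨z, hzD, hbz⟩ := hD b ⟨hbA, hbD'⟩
    refine ⟨z, ⟨hzD, ?_⟩, hbz⟩
    rintro rfl
    exact hpriv b ⟨hAU hbA, hbD'⟩ hbz.symm

/-- Ore's argument: the complement of a minimum dominating set is dominating as well. -/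
lemma exists_dominates_two_mul_ncard_le [Finite α] {U A : Set α} (hAU : A ⊆ U)
    (hA : ∀ a ∈ A, ∃ z ∈ U, H.Adj a z) :
    ∃ Z ⊆ U, 2 * Z.ncard ≤ U.ncard ∧ Dominates H Z A := by
  obtain ⟨D, ⟨hDU, hD⟩, hmin⟩ := Set.exists_min_image {D | D ⊆ U ∧ Dominates H D A} Set.ncard
    (Set.toFinite _) ⟨U, subset_rfl, fun a ha => absurd (hAU ha.1) ha.2⟩
  have hcompl : Dominates H (U \ D) A := by
    rintro a ⟨haA, haUD⟩
    have haD : a ∈ D := by_contra fun h => haUD ⟨hAU haA, h⟩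
    by_contra! hpriv
    exact (hmin _ ⟨Set.sdiff_subset.trans hDU, hD.diff_singleton hAU (hA a haA) hpriv⟩).not_gt
      (Set.ncard_sdiff_singleton_lt_of_mem haD)
  have hsum := Set.ncard_sdiff_add_ncard_of_subset hDU
  by_cases hD2 : 2 * D.ncard ≤ U.ncard
  · exact ⟨D, hDU, hD2, hD⟩
  · exact ⟨U \ D, Set.sdiff_subset, by omega, hcompl⟩

end Domination

section LocatingPartition

variable {V : Type*} {G : SimpleGraph V}

lemma setDist_singleton (u z : V) : setDist G u {z} = G.dist u z := by
  simp [setDist]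

lemma setDist_eq_zero_iff (hG : G.Connected) {u : V} {S : Set V} (hS : S.Nonempty) :
    setDist G u S = 0 ↔ u ∈ S := by
  refine ⟨fun h => ?_, fun h => Nat.eq_zero_of_le_zero (Nat.sInf_le ⟨u, h, dist_self⟩)⟩
  obtain ⟨w, hwS, hw⟩ := Nat.sInf_mem (hS.image (G.dist u))
  rwa [hG.dist_eq_zero_iff.mp (hw.trans h)]

lemma partitionDim_le_ncard {P : Set (Set V)} (hP : IsLocatingPartition G P) :
    partitionDim G ≤ P.ncard :=
  Nat.sInf_le ⟨P, hP, rfl⟩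

lemma isLocatingPartition_of_separated (hG : G.Connected) {P : Set (Set V)}
    (hP : Setoid.IsPartition P)
    (hsep : ∀ S ∈ P, ∀ a ∈ S, ∀ b ∈ S, a ≠ b → ∃ T ∈ P, setDist G a T ≠ setDist G b T) :
    IsLocatingPartition G P := by
  refine ⟨hP, fun u v huv => by_contra fun hne => ?_⟩
  obtain ⟨S, ⟨hSP, huS⟩, -⟩ := hP.2 u
  have hvS : v ∈ S := by
    rw [← setDist_eq_zero_iff hG ⟨u, huS⟩, ← huv S hSP, setDist_eq_zero_iff hG ⟨u, huS⟩]
    exact huS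
  obtain ⟨T, hTP, hT⟩ := hsep S hSP u huS v hvS hne
  exact hT (huv T hTP)

end LocatingPartition

section Pairing

variable {α : Type*} {M : Set α} {f : α → α}

lemma piecewise_id_notMem (hfM : Set.MapsTo f M Mᶜ) (x : α) : M.piecewise f id x ∉ M := by
  by_cases hx : x ∈ M
  · rw [Set.piecewise_eq_of_mem _ _ _ hx]
    exact hfM hx
  · rwa [Set.piecewise_eq_of_notMem _ _ _ hx]

lemma eq_of_piecewise_id_eq (hf : Set.InjOn f M) {a b : α}
    (h : M.piecewise f id a = M.piecewise f id b) (hab : a ≠ b) :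
    (a ∈ M ∧ b = f a) ∨ (b ∈ M ∧ a = f b) := by
  by_cases ha : a ∈ M <;> by_cases hb : b ∈ M <;>
    simp only [ha, hb, Set.piecewise_eq_of_mem, Set.piecewise_eq_of_notMem, not_false_eq_true,
      id] at h
  · exact absurd (hf ha hb h) hab
  · exact Or.inl ⟨ha, h.symm⟩
  · exact Or.inr ⟨hb, h⟩
  · exact absurd h hab

lemma piecewise_id_fiber_eq_singleton {z : α} (hz : z ∉ M) (hz' : z ∉ f '' M) :
    {x | M.piecewise f id x = M.piecewise f id z} = {z} := by
  ext x
  show M.piecewise f id x = M.piecewise f id z ↔ x = z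
  rw [Set.piecewise_eq_of_notMem _ _ _ hz]
  by_cases hx : x ∈ M
  · rw [Set.piecewise_eq_of_mem _ _ _ hx]
    exact iff_of_false (fun h => hz' ⟨x, hx, h⟩) (fun h => hz (h ▸ hx))
  · rw [Set.piecewise_eq_of_notMem _ _ _ hx]
    rfl

lemma ncard_classes_ker_piecewise_id_le [Finite α] (hfM : Set.MapsTo f M Mᶜ) :
    (Setoid.ker (M.piecewise f id)).classes.ncard ≤ Mᶜ.ncard :=
  calc _ ≤ ((fun y => {x | M.piecewise f id x = y}) '' Mᶜ).ncard :=
        Set.ncard_le_ncard (by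
          rintro _ ⟨y, rfl⟩
          exact ⟨_, piecewise_id_notMem hfM y, rfl⟩) (Set.toFinite _)
    _ ≤ Mᶜ.ncard := Set.ncard_image_le (Set.toFinite _)

variable {G : SimpleGraph α}

lemma isLocatingPartition_classes_ker_piecewise_id (hG : G.Connected) (hf : Set.InjOn f M)
    (hsep : ∀ m ∈ M, ∃ z ∉ M, z ∉ f '' M ∧ G.dist m z ≠ G.dist (f m) z) :
    IsLocatingPartition G (Setoid.ker (M.piecewise f id)).classes := by
  have hpair : ∀ m ∈ M, ∃ T ∈ (Setoid.ker (M.piecewise f id)).classes,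
      setDist G m T ≠ setDist G (f m) T := by
    intro m hm
    obtain ⟨z, hzM, hzf, hz⟩ := hsep m hm
    refine ⟨_, Setoid.mem_classes _ z, ?_⟩
    simp only [Setoid.ker_def]
    rwa [piecewise_id_fiber_eq_singleton hzM hzf, setDist_singleton, setDist_singleton]
  refine isLocatingPartition_of_separated hG (Setoid.isPartition_classes _) ?_
  rintro _ ⟨y, rfl⟩ a ha b hb hab
  rcases eq_of_piecewise_id_eq hf (ha.trans hb.symm) hab with ⟨ha, rfl⟩ | ⟨hb, rfl⟩
  · exact hpair a ha
  · obtain ⟨T, hT, hne⟩ := hpair b hb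
    exact ⟨T, hT, hne.symm⟩

/-- The locating partition is the one with parts `{m, f m}` for `m ∈ M` and singletons. -/
lemma partitionDim_add_ncard_le [Finite α] (hG : G.Connected) (hf : Set.InjOn f M)
    (hfM : Set.MapsTo f M Mᶜ) (hsep : ∀ m ∈ M, ∃ z ∉ M, z ∉ f '' M ∧ G.dist m z ≠ G.dist (f m) z) :
    partitionDim G + M.ncard ≤ Nat.card α := by
  have hdim := partitionDim_le_ncard (isLocatingPartition_classes_ker_piecewise_id hG hf hsep)
  have hcard := ncard_classes_ker_piecewise_id_le hfM
  have hsplit := Set.ncard_add_ncard_compl M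
  omega

end Pairing

section CliqueTwinClass

variable {V : Type*} {G : SimpleGraph V} {u : V}

lemma exists_dist_ne_of_adj_twinClass (hclique : ∀ w ∈ twinClass G u, w ≠ u → G.Adj u w)
    {p : V} (hp : p ∉ twinClass G u) (hadj : G.Adj u p) :
    ∃ z ∉ twinClass G u, z ≠ p ∧ G.dist p z ≠ G.dist u z := by
  have hnt : ¬∀ z, z ≠ u → z ≠ p → (G.Adj u z ↔ G.Adj p z) :=
    fun h => hp (isTwin_iff_forall_adj_iff.mpr h)
  simp only [not_forall] at hnt
  obtain ⟨z, hzu, hzp, hz⟩ := hnt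
  refine ⟨z, fun hzW => hz ?_, hzp, fun hd => hz ?_⟩
  · exact iff_of_true (hclique z hzW hzu) ((mem_twinClass.mp hzW).adj_of_adj hadj hzp.symm).symm
  · rw [← dist_eq_one_iff_adj, ← dist_eq_one_iff_adj, hd]

lemma exists_resolving_two_mul_ncard_le [Finite V] {U A : Set V} (hAU : A ⊆ U)
    (hA : ∀ p ∈ A, G.Adj u p) (hres : ∀ p ∈ A, ∃ z ∈ U, z ≠ p ∧ G.dist p z ≠ G.dist u z) :
    ∃ Z ⊆ U, 2 * Z.ncard ≤ U.ncard ∧ ∀ p ∈ A \ Z, ∃ z ∈ Z, G.dist p z ≠ G.dist u z := by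
  let H := SimpleGraph.fromRel fun a b => a ∈ A ∧ G.dist a b ≠ G.dist u b
  obtain ⟨Z, hZU, hZcard, hZ⟩ := exists_dominates_two_mul_ncard_le (H := H) hAU
    fun p hp => let ⟨z, hzU, hzp, hz⟩ := hres p hp; ⟨z, hzU, hzp.symm, Or.inl ⟨hp, hz⟩⟩
  refine ⟨Z, hZU, hZcard, fun p hp => ?_⟩
  obtain ⟨z, hzZ, -, ⟨-, hpz⟩ | ⟨hzA, hzp⟩⟩ := hZ p hp
  · exact ⟨z, hzZ, hpz⟩
  · -- `u` is adjacent to both `p` and `z`, so `d(z,p) ≠ d(u,p) = 1 = d(u,z)`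
    refine ⟨z, hzZ, ?_⟩
    rwa [dist_comm, dist_eq_one_iff_adj.mpr (hA z hzA), ← dist_eq_one_iff_adj.mpr (hA p hp.1)]

lemma two_mul_partitionDim_add_ncard_compl_le [Finite V] (hG : G.Connected)
    (hclique : ∀ w ∈ twinClass G u, w ≠ u → G.Adj u w)
    (hsmall : (twinClass G u)ᶜ.ncard < (twinClass G u).ncard) :
    2 * partitionDim G + (twinClass G u)ᶜ.ncard ≤ 2 * Nat.card V := by
  set W := twinClass G u
  obtain ⟨Z, hZU, hZcard, hZ⟩ := exists_resolving_two_mul_ncard_le (A := {p ∈ Wᶜ | G.Adj u p})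
    (fun p hp => hp.1) (fun p hp => hp.2)
    (fun p hp => exists_dist_ne_of_adj_twinClass hclique hp.1 hp.2)
  have hle : Wᶜ.encard ≤ (W \ {u}).encard := by
    rw [← (Set.toFinite _).cast_ncard_eq, ← (Set.toFinite _).cast_ncard_eq,
      Set.ncard_sdiff_singleton_of_mem mem_twinClass_self]
    exact_mod_cast (by omega : Wᶜ.ncard ≤ W.ncard - 1)
  have : Nonempty V := ⟨u⟩
  obtain ⟨f, hfW, hf⟩ := (Set.toFinite Wᶜ).exists_injOn_of_encard_le hle
  set M := Wᶜ \ Z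
  have hfM : ∀ m ∈ M, f m ∈ W \ {u} := fun m hm => hfW hm.1
  have hsep : ∀ m ∈ M, ∃ z ∉ M, z ∉ f '' M ∧ G.dist m z ≠ G.dist (f m) z := by
    intro m hm
    have hfMW : f '' M ⊆ W \ {u} := Set.image_subset_iff.mpr hfM
    obtain ⟨hfm, hfmu⟩ := hfM m hm
    by_cases hadj : G.Adj u m
    · obtain ⟨z, hzZ, hz⟩ := hZ m ⟨⟨hm.1, hadj⟩, hm.2⟩
      have hzW : z ∉ W := hZU hzZ
      have htwin : G.dist z u = G.dist z (f m) := (mem_twinClass.mp hfm).dist_eq hG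
        (fun h => hzW (h ▸ mem_twinClass_self)) (fun h => hzW (h ▸ hfm))
      refine ⟨z, fun h => h.2 hzZ, fun h => hzW (hfMW h).1, ?_⟩
      rwa [dist_comm (u := f m), ← htwin, dist_comm (u := z)]
    · refine ⟨u, fun h => h.1 mem_twinClass_self, fun h => (hfMW h).2 rfl, fun h => hadj ?_⟩
      rw [← dist_eq_one_iff_adj, dist_comm, h, dist_eq_one_iff_adj]
      exact (hclique _ hfm hfmu).symm
  have hdim := partitionDim_add_ncard_le hG (hf.mono Set.sdiff_subset)
    (fun m hm hfm => hfm.1 (hfM m hm).1) hsep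
  have hsplit := Set.ncard_sdiff_add_ncard_of_subset hZU
  omega

end CliqueTwinClass

/-- For a connected graph `G` of order `n` with `2·τ(G) > n` and `τ(G) = n - k`,
if the twin class `W` of maximum cardinality induces a complete subgraph,
then `2·β_p(G) ≤ 2n - k`. -/
theorem partitionDim_upper_of_clique_twinClass {V : Type*} [Fintype V]
    (G : SimpleGraph V) (hG : G.Connected) (n : ℕ) (hn : Fintype.card V = n)
    (hτ : n < 2 * twinNumber G)
    (k : ℕ) (hk : twinNumber G = n - k)
    (W : Set V) (hW : ∃ u : V, W = twinClass G u)
    (hWcard : W.ncard = twinNumber G)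
    (hclique : ∀ u ∈ W, ∀ v ∈ W, u ≠ v → G.Adj u v) :
    2 * partitionDim G ≤ 2 * n - k := by
  obtain ⟨u, rfl⟩ := hW
  have hsplit := Set.ncard_compl_add_ncard (twinClass G u)
  rw [Nat.card_eq_fintype_card, hn] at hsplit
  have key := two_mul_partitionDim_add_ncard_compl_le hG
    (fun w hw hwu => hclique u mem_twinClass_self w hw hwu.symm) (by omega)
  rw [Nat.card_eq_fintype_card, hn] at key
  omega
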